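/- arXiv:1912.13147 — 2 statements merged into one kernel-verified Lean document; each statement's English description precedes it below -/
import Mathlib

section
/- Let R be a Hermitian bilinear curvature-type tensor on C^n, i.e., complex numbers R_{i j̄ k l̄} satisfying the symmetry R_{i j̄ k l̄} = conj(R_{j ī l k̄}) and R_{i j̄ k l̄} = R_{k j̄ i l̄}. If the holomorphic sectional curvature H(v) := Σ R_{i j̄ k l̄} v^i conj(v^j) v^k conj(v^l) is nonnegative for all v ∈ C^n, then S + Ŝ ≥ 0, where S := Σ_{i,k} R_{i ī k k̄} and Ŝ := Σ_{i,k} R_{i k̄ k ī}. -/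
open Finset

noncomputable def phi (t : ZMod 4) : ℂ := Complex.I ^ t.val

lemma I_pow_mod (m : ℕ) : Complex.I ^ (m % 4) = Complex.I ^ m := by
  conv_rhs => rw [← Nat.div_add_mod m 4]
  rw [pow_add, pow_mul, Complex.I_pow_four, one_pow, one_mul]

lemma phi_natCast (m : ℕ) : phi (m : ZMod 4) = Complex.I ^ m := by
  rw [phi, ZMod.val_natCast, I_pow_mod]

lemma phi_add (a b : ZMod 4) : phi (a + b) = phi a * phi b := by
  obtain ⟨p, rfl⟩ := ZMod.natCast_zmod_surjective (n := 4) a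
  obtain ⟨q, rfl⟩ := ZMod.natCast_zmod_surjective (n := 4) b
  rw [← Nat.cast_add, phi_natCast, phi_natCast, phi_natCast, pow_add]

lemma phi_zero : phi 0 = 1 := by simp [phi]

lemma I_pow_three : Complex.I ^ 3 = -Complex.I := by
  rw [pow_succ, Complex.I_sq]; ring

lemma phi_conj (t : ZMod 4) : (starRingEnd ℂ) (phi t) = phi (-t) := by
  obtain ⟨p, rfl⟩ := ZMod.natCast_zmod_surjective (n := 4) t
  have h3 : (-((p : ℕ) : ZMod 4)) = ((3 * p : ℕ) : ZMod 4) := by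
    push_cast
    rw [show ((3 : ZMod 4)) = -1 from by decide]
    ring
  rw [phi_natCast, map_pow, Complex.conj_I, h3, phi_natCast, pow_mul, I_pow_three]

lemma phi_ne_one (a : ZMod 4) (h : a ≠ 0) : phi a ≠ 1 := by
  have hv : a.val < 4 := ZMod.val_lt a
  have hv0 : a.val ≠ 0 := by
    simpa [ZMod.val_eq_zero] using h
  have hv1 : 1 ≤ a.val := Nat.pos_of_ne_zero hv0
  rw [phi]
  set v := a.val with hvv
  interval_cases v <;>
    norm_num [Complex.I_sq, I_pow_three, Complex.ext_iff]

lemma phi_orth (a : ZMod 4) : ∑ t : ZMod 4, phi (a * t) = if a = 0 then 4 else 0 := by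
  by_cases h : a = 0
  · subst h
    rw [if_pos rfl]
    simp [phi_zero]
  · rw [if_neg h]
    have key : ∑ t : ZMod 4, phi (a * t) = phi a * ∑ t : ZMod 4, phi (a * t) := by
      rw [Finset.mul_sum]
      apply Fintype.sum_equiv (Equiv.addLeft (1 : ZMod 4)).symm
      intro t
      simp only [Equiv.coe_addLeft, Equiv.symm_apply_apply, Equiv.addLeft_symm, Equiv.coe_addLeft]
      rw [← phi_add, show a + a * (-1 + t) = a * t from by ring]
    have h2 : (phi a - 1) * ∑ t : ZMod 4, phi (a * t) = 0 := by
      linear_combination -key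
    rcases mul_eq_zero.mp h2 with h3 | h3
    · exact absurd (by linear_combination h3) (phi_ne_one a h)
    · exact h3

lemma phi_sum {α : Type*} (s : Finset α) (f : α → ZMod 4) :
    phi (∑ x ∈ s, f x) = ∏ x ∈ s, phi (f x) := by
  induction s using Finset.cons_induction with
  | empty => simp [phi_zero]
  | cons a s ha ih => rw [Finset.sum_cons, Finset.prod_cons, phi_add, ih]

lemma sum_phi_linear (n : ℕ) (a : Fin n → ZMod 4) :
    ∑ ε : Fin n → ZMod 4, phi (∑ m, a m * ε m)
      = if (∀ m, a m = 0) then (4 : ℂ) ^ n else 0 := by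
  have h1 : ∀ ε : Fin n → ZMod 4, phi (∑ m, a m * ε m) = ∏ m, phi (a m * ε m) :=
    fun ε => phi_sum _ _
  simp_rw [h1]
  rw [← Fintype.prod_sum (fun m t => phi (a m * t))]
  simp_rw [phi_orth]
  by_cases h : ∀ m, a m = 0
  · rw [if_pos h]
    rw [Finset.prod_congr rfl (fun m _ => if_pos (h m))]
    simp
  · rw [if_neg h]
    push_neg at h
    obtain ⟨m, hm⟩ := h
    exact Finset.prod_eq_zero (Finset.mem_univ m) (if_neg hm)

lemma cond_iff (n : ℕ) (i j k l : Fin n) :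
    (∀ m : Fin n, (if m = i then (1 : ZMod 4) else 0) + (if m = k then 1 else 0)
      - (if m = j then 1 else 0) - (if m = l then 1 else 0) = 0)
    ↔ ((i = j ∧ k = l) ∨ (i = l ∧ k = j)) := by
  constructor
  · intro h
    have key : ∀ m : Fin n, ((if m = i then 1 else 0) + (if m = k then 1 else 0) : ℕ)
        = (if m = j then 1 else 0) + (if m = l then 1 else 0) := by
      intro m
      have hm := h m
      have hc : (((if m = i then 1 else 0) + (if m = k then 1 else 0) : ℕ) : ZMod 4)
          = (((if m = j then 1 else 0) + (if m = l then 1 else 0) : ℕ) : ZMod 4) := by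
        push_cast
        linear_combination hm
      have h4 := (ZMod.natCast_eq_natCast_iff _ _ _).mp hc
      have b1 : ((if m = i then 1 else 0) : ℕ) ≤ 1 := by split <;> omega
      have b2 : ((if m = k then 1 else 0) : ℕ) ≤ 1 := by split <;> omega
      have b3 : ((if m = j then 1 else 0) : ℕ) ≤ 1 := by split <;> omega
      have b4 : ((if m = l then 1 else 0) : ℕ) ≤ 1 := by split <;> omega
      have h5 : ((if m = i then 1 else 0) + (if m = k then 1 else 0) : ℕ) % 4
          = ((if m = j then 1 else 0) + (if m = l then 1 else 0) : ℕ) % 4 := h4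
      omega
    by_cases hij : i = j
    · by_cases hkl : k = l
      · exact Or.inl ⟨hij, hkl⟩
      · exfalso
        subst hij
        have h1 := key k
        by_cases hki : k = i
        · subst hki
          simp [hkl] at h1
        · simp [hki, hkl] at h1
    · by_cases hil : i = l
      · subst hil
        by_cases hkj : k = j
        · exact Or.inr ⟨rfl, hkj⟩
        · exfalso
          have h1 := key k
          by_cases hki : k = i <;> simp [hki, hkj, hij] at h1
      · exfalso
        have h1 := key i
        by_cases hik : i = k
        · subst hik
          simp [hij, hil] at h1
        · simp [hik, hij, hil] at h1
  · rintro (⟨rfl, rfl⟩ | ⟨rfl, rfl⟩) m <;> ring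

lemma T_eq (n : ℕ) (i j k l : Fin n) :
    ∑ ε : Fin n → ZMod 4,
        phi (ε i) * (starRingEnd ℂ) (phi (ε j)) * phi (ε k) * (starRingEnd ℂ) (phi (ε l))
      = if (i = j ∧ k = l) ∨ (i = l ∧ k = j) then (4 : ℂ) ^ n else 0 := by
  set a : Fin n → ZMod 4 := fun m =>
    (if m = i then 1 else 0) + (if m = k then 1 else 0)
      - (if m = j then 1 else 0) - (if m = l then 1 else 0) with ha
  have hsum : ∀ ε : Fin n → ZMod 4, ∑ m, a m * ε m = ε i + ε k - ε j - ε l := by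
    intro ε
    simp only [ha, add_mul, sub_mul, ite_mul, one_mul, zero_mul]
    rw [Finset.sum_sub_distrib, Finset.sum_sub_distrib, Finset.sum_add_distrib]
    simp [Finset.sum_ite_eq']
  have hint : ∀ ε : Fin n → ZMod 4,
      phi (ε i) * (starRingEnd ℂ) (phi (ε j)) * phi (ε k) * (starRingEnd ℂ) (phi (ε l))
        = phi (∑ m, a m * ε m) := by
    intro ε
    rw [hsum ε, phi_conj, phi_conj, sub_eq_add_neg, sub_eq_add_neg, phi_add, phi_add, phi_add]
    ring
  simp_rw [hint]
  rw [sum_phi_linear]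
  exact if_congr (cond_iff n i j k l) rfl rfl

lemma split4 {n : ℕ} (x c : ℂ) (i j k l : Fin n) :
    x * (if (i = j ∧ k = l) ∨ (i = l ∧ k = j) then c else 0)
      = (if k = l ∧ i = j then x * c else 0) + (if i = l ∧ k = j then x * c else 0)
        - (if k = l ∧ k = i ∧ i = j then x * c else 0) := by
  have e1 : (k = l ∧ i = j) ↔ (i = j ∧ k = l) := and_comm
  have e2 : (k = l ∧ k = i ∧ i = j) ↔ ((i = j ∧ k = l) ∧ (i = l ∧ k = j)) := by
    constructor
    · rintro ⟨h2, h4, h1⟩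
      exact ⟨⟨h1, h2⟩, h4.symm.trans h2, h4.trans h1⟩
    · rintro ⟨⟨h1, h2⟩, h3, h4⟩
      exact ⟨h2, h4.trans h1.symm, h1⟩
  rw [if_congr e1 rfl rfl, if_congr e2 rfl rfl]
  by_cases hP : (i = j ∧ k = l) <;> by_cases hQ : (i = l ∧ k = j) <;> simp [hP, hQ]

/-- Berger's averaging trick: if a curvature-type tensor `R` on `ℂ^n` with the Hermitian
symmetries has nonnegative holomorphic sectional curvature
`H(v) = Σ R_{i j̄ k l̄} v^i conj(v^j) v^k conj(v^l)`, then `S + Ŝ ≥ 0`, where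
`S = Σ R_{i ī k k̄}` and `Ŝ = Σ R_{i k̄ k ī}`. -/
theorem berger_averaging_nonneg (n : ℕ) (hn : 1 ≤ n)
    (R : Fin n → Fin n → Fin n → Fin n → ℂ)
    (hsym1 : ∀ i j k l, R i j k l = (starRingEnd ℂ) (R j i l k))
    (hsym2 : ∀ i j k l, R i j k l = R k j i l)
    (hnonneg : ∀ v : Fin n → ℂ,
      0 ≤ (∑ i, ∑ j, ∑ k, ∑ l,
        R i j k l * v i * (starRingEnd ℂ) (v j) * v k * (starRingEnd ℂ) (v l)).re) :
    0 ≤ ((∑ i, ∑ k, R i i k k) + (∑ i, ∑ k, R i k k i)).re ∧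
      ((∑ i, ∑ k, R i i k k) + (∑ i, ∑ k, R i k k i)).im = 0 := by
  -- basic conjugation facts
  have hSconj : ∀ i k : Fin n, (starRingEnd ℂ) (R i i k k) = R i i k k :=
    fun i k => (hsym1 i i k k).symm
  have hreal : ∀ i k : Fin n, R i k k i = R i i k k := by
    intro i k
    rw [hsym1 i k k i, hsym2 k i i k, ← hsym1 i i k k]
  -- the averaging identity
  have claim : ∑ ε : Fin n → ZMod 4, (∑ i, ∑ j, ∑ k, ∑ l,
        R i j k l * phi (ε i) * (starRingEnd ℂ) (phi (ε j)) * phi (ε k)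
          * (starRingEnd ℂ) (phi (ε l)))
      = (4 : ℂ) ^ n * ((∑ i, ∑ k, R i i k k) + (∑ i, ∑ k, R i k k i) - ∑ i, R i i i i) := by
    have step1 : ∑ ε : Fin n → ZMod 4, (∑ i, ∑ j, ∑ k, ∑ l,
        R i j k l * phi (ε i) * (starRingEnd ℂ) (phi (ε j)) * phi (ε k)
          * (starRingEnd ℂ) (phi (ε l)))
        = ∑ i, ∑ j, ∑ k, ∑ l, R i j k l *
            (if (i = j ∧ k = l) ∨ (i = l ∧ k = j) then (4 : ℂ) ^ n else 0) := by
      rw [Finset.sum_comm]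
      refine Finset.sum_congr rfl fun i _ => ?_
      rw [Finset.sum_comm]
      refine Finset.sum_congr rfl fun j _ => ?_
      rw [Finset.sum_comm]
      refine Finset.sum_congr rfl fun k _ => ?_
      rw [Finset.sum_comm]
      refine Finset.sum_congr rfl fun l _ => ?_
      rw [← T_eq n i j k l, Finset.mul_sum]
      exact Finset.sum_congr rfl fun ε _ => by ring
    rw [step1]
    have step2 : ∑ i, ∑ j, ∑ k, ∑ l, R i j k l *
            (if (i = j ∧ k = l) ∨ (i = l ∧ k = j) then (4 : ℂ) ^ n else 0)
        = ∑ i : Fin n, ∑ j : Fin n, ∑ k : Fin n, ∑ l : Fin n,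
            ((if k = l ∧ i = j then R i j k l * (4 : ℂ) ^ n else 0)
              + (if i = l ∧ k = j then R i j k l * (4 : ℂ) ^ n else 0)
              - (if k = l ∧ k = i ∧ i = j then R i j k l * (4 : ℂ) ^ n else 0)) := by
      refine Finset.sum_congr rfl fun i _ => Finset.sum_congr rfl fun j _ =>
        Finset.sum_congr rfl fun k _ => Finset.sum_congr rfl fun l _ => ?_
      exact split4 _ _ i j k l
    rw [step2]
    simp only [Finset.sum_add_distrib, Finset.sum_sub_distrib]
    simp only [ite_and, Finset.sum_ite_irrel, Finset.sum_const_zero, Finset.sum_ite_eq,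
      Finset.sum_ite_eq', Finset.mem_univ, if_true]
    rw [mul_sub, mul_add]
    simp only [Finset.mul_sum]
    congr 1
    · congr 1
      · exact Finset.sum_congr rfl fun i _ => Finset.sum_congr rfl fun k _ => by ring
      · -- second sum : ∑ i ∑ j R i j j i ↔ ∑ i ∑ k R i k k i
        exact Finset.sum_congr rfl fun i _ => Finset.sum_congr rfl fun j _ => by ring
    · exact Finset.sum_congr rfl fun i _ => by ring
  -- nonnegativity of the averaged sum
  have havg : 0 ≤ ((4 : ℂ) ^ n *
      ((∑ i, ∑ k, R i i k k) + (∑ i, ∑ k, R i k k i) - ∑ i, R i i i i)).re := by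
    rw [← claim, Complex.re_sum]
    refine Finset.sum_nonneg fun ε _ => ?_
    simpa using hnonneg (fun m => phi (ε m))
  have h4n : ((4 : ℂ) ^ n) = (((4 : ℝ) ^ n : ℝ) : ℂ) := by push_cast; ring
  rw [h4n, Complex.re_ofReal_mul] at havg
  have hpow : (0 : ℝ) < 4 ^ n := by positivity
  have hmain : 0 ≤ ((∑ i, ∑ k, R i i k k) + (∑ i, ∑ k, R i k k i) - ∑ i, R i i i i).re := by
    nlinarith [havg, hpow]
  -- diagonal nonnegativity
  have hDiag : ∀ a : Fin n, (∑ i, ∑ j, ∑ k, ∑ l,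
      R i j k l * (if i = a then (1:ℂ) else 0) * (starRingEnd ℂ) (if j = a then (1:ℂ) else 0)
        * (if k = a then (1:ℂ) else 0) * (starRingEnd ℂ) (if l = a then (1:ℂ) else 0))
      = R a a a a := by
    intro a
    simp only [apply_ite (starRingEnd ℂ), map_one, map_zero, mul_ite, ite_mul,
      mul_one, mul_zero, zero_mul, Finset.sum_ite_irrel, Finset.sum_ite_eq,
      Finset.sum_ite_eq', Finset.mem_univ, if_true, Finset.sum_const_zero]
  have hD : 0 ≤ (∑ i, R i i i i).re := by
    rw [Complex.re_sum]
    refine Finset.sum_nonneg fun a _ => ?_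
    have := hnonneg (fun m => if m = a then (1:ℂ) else 0)
    rw [hDiag a] at this
    exact this
  constructor
  · have : ((∑ i, ∑ k, R i i k k) + (∑ i, ∑ k, R i k k i)).re
        = ((∑ i, ∑ k, R i i k k) + (∑ i, ∑ k, R i k k i) - ∑ i, R i i i i).re
          + (∑ i, R i i i i).re := by
      simp [Complex.sub_re]
    rw [this]
    exact add_nonneg hmain hD
  · -- imaginary part
    have him : ∀ i k : Fin n, (R i i k k).im = 0 := by
      intro i k
      have := hSconj i k
      exact (Complex.conj_eq_iff_im.mp this)
    have h1 : (∑ i, ∑ k, R i i k k).im = 0 := by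
      rw [Complex.im_sum]
      refine Finset.sum_eq_zero fun i _ => ?_
      rw [Complex.im_sum]
      exact Finset.sum_eq_zero fun k _ => him i k
    have h2 : (∑ i, ∑ k, R i k k i).im = 0 := by
      rw [Complex.im_sum]
      refine Finset.sum_eq_zero fun i _ => ?_
      rw [Complex.im_sum]
      exact Finset.sum_eq_zero fun k _ => by rw [hreal i k]; exact him i k
    rw [Complex.add_im, h1, h2]
    norm_num
end

section
/- With the same setup, if the holomorphic sectional curvature H(v) is nonnegative for all v and strictly positive for some v₀ ≠ 0, then S + Ŝ > 0. -/
/-!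
Berger's averaging argument, with the torus average replaced by a finite one. Take an
orthonormal frame `e_p` and independent phases `ε_p` uniformly distributed over the fourth roots
of unity. Since the mean of `ε_p ε̄_q ε_r ε̄_s` is `1` when `{p, r} = {q, s}` as multisets and `0`
otherwise, the mean of `H(∑ ε_p e_p)` is `S + Ŝ - ∑_p H(e_p)`, where `S` and `Ŝ` do not depend on
the frame. So `S + Ŝ` is a sum of nonnegative values of `H`, among them `H(e_p)` for a frame
vector proportional to `v₀`.
-/

open Finset Matrix ComplexConjugate

theorem sum_comm_sum₄ {α β M : Type*} [Fintype α] [Fintype β] [AddCommMonoid M]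
    (g : α → β → β → β → β → M) :
    ∑ x, ∑ i, ∑ j, ∑ k, ∑ l, g x i j k l = ∑ i, ∑ j, ∑ k, ∑ l, ∑ x, g x i j k l := by
  rw [sum_comm]; refine sum_congr rfl fun i _ => ?_
  rw [sum_comm]; refine sum_congr rfl fun j _ => ?_
  rw [sum_comm]; refine sum_congr rfl fun k _ => ?_
  rw [sum_comm]

theorem sum_comm₄₄ {α β M : Type*} [Fintype α] [Fintype β] [AddCommMonoid M]
    (g : α → α → α → α → β → β → β → β → M) :
    ∑ p, ∑ q, ∑ r, ∑ s, ∑ i, ∑ j, ∑ k, ∑ l, g p q r s i j k l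
      = ∑ i, ∑ j, ∑ k, ∑ l, ∑ p, ∑ q, ∑ r, ∑ s, g p q r s i j k l := by
  simp only [sum_comm_sum₄ (β := β)]

theorem mul_sum_mul_sum_mul_sum_mul_sum {α M : Type*} [Fintype α] [CommSemiring M]
    (x : M) (a b c d : α → M) :
    x * (∑ p, a p) * (∑ q, b q) * (∑ r, c r) * (∑ s, d s)
      = ∑ p, ∑ q, ∑ r, ∑ s, x * a p * b q * c r * d s := by
  simp only [mul_sum _ a, sum_mul]; refine sum_congr rfl fun p _ => ?_
  simp only [mul_sum _ b, sum_mul]; refine sum_congr rfl fun q _ => ?_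
  simp only [mul_sum _ c, sum_mul]; refine sum_congr rfl fun r _ => ?_
  rw [mul_sum]

theorem ite_or_eq_add_sub {M : Type*} [Ring M] {P Q : Prop} [Decidable P] [Decidable Q] (c : M) :
    (if P ∨ Q then c else 0)
      = (if P then c else 0) + (if Q then c else 0) - (if P ∧ Q then c else 0) := by
  by_cases P <;> by_cases Q <;> simp [*]

theorem Multiset.pair_eq_pair_iff {α : Type*} {p q r s : α} :
    ({p, r} : Multiset α) = {q, s} ↔ (p = q ∧ r = s) ∨ (p = s ∧ r = q) := by
  simp only [insert_eq_cons, cons_eq_cons, singleton_eq_cons_iff, singleton_inj]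
  grind

theorem prod_pow_count_pair {ι M : Type*} [Fintype ι] [DecidableEq ι] [CommMonoid M]
    (x : ι → M) (p r : ι) :
    ∏ a, x a ^ Multiset.count a {p, r} = x p * x r := by
  simp only [Multiset.insert_eq_cons, Multiset.count_cons, Multiset.count_singleton, pow_add,
    pow_ite, pow_one, pow_zero, prod_mul_distrib, prod_ite_eq', mem_univ, if_true, mul_comm]

theorem sum_I_pow_pow_mul_conj_pow {u v : ℕ} (hu : u ≤ 2) (hv : v ≤ 2) :
    ∑ c : Fin 4, (Complex.I ^ (c : ℕ)) ^ u * conj (Complex.I ^ (c : ℕ)) ^ v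
      = if u = v then 4 else 0 := by
  interval_cases u <;> interval_cases v <;>
    simp [Fin.sum_univ_four, Complex.conj_I, ← pow_mul] <;> ring_nf <;>
    norm_num [Complex.I_sq, pow_succ]

variable {ι κ : Type*} [Fintype ι] [Fintype κ]

def holSecCurv (R : ι → ι → ι → ι → ℂ) (v : ι → ℂ) : ℂ :=
  ∑ i, ∑ j, ∑ k, ∑ l, R i j k l * v i * conj (v j) * v k * conj (v l)

def scalarCurv (R : ι → ι → ι → ι → ℂ) : ℂ := ∑ i, ∑ k, R i i k k

def scalarCurvHat (R : ι → ι → ι → ι → ℂ) : ℂ := ∑ i, ∑ k, R i k k i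

def changeFrame (R : ι → ι → ι → ι → ℂ) (U : Matrix ι κ ℂ) : κ → κ → κ → κ → ℂ :=
  fun p q r s => ∑ i, ∑ j, ∑ k, ∑ l, R i j k l * U i p * conj (U j q) * U k r * conj (U l s)

theorem holSecCurv_changeFrame (R : ι → ι → ι → ι → ℂ) (U : Matrix ι κ ℂ) (x : κ → ℂ) :
    holSecCurv (changeFrame R U) x = holSecCurv R (U *ᵥ x) := by
  simp only [holSecCurv, changeFrame, mulVec, dotProduct, map_sum, map_mul,
    mul_sum_mul_sum_mul_sum_mul_sum, sum_mul]
  rw [sum_comm₄₄]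
  refine sum_congr rfl fun i _ => sum_congr rfl fun j _ => sum_congr rfl fun k _ =>
    sum_congr rfl fun l _ => sum_congr rfl fun p _ => sum_congr rfl fun q _ =>
    sum_congr rfl fun r _ => sum_congr rfl fun s _ => by ring

omit [Fintype κ] in
theorem changeFrame_diag (R : ι → ι → ι → ι → ℂ) (U : Matrix ι κ ℂ) (p : κ) :
    changeFrame R U p p p p = holSecCurv R (Uᵀ p) := rfl

theorem re_holSecCurv_smul (R : ι → ι → ι → ι → ℂ) (c : ℝ) (v : ι → ℂ) :
    (holSecCurv R (c • v)).re = c ^ 4 * (holSecCurv R v).re := by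
  have h : holSecCurv R (c • v) = ((c ^ 4 : ℝ) : ℂ) * holSecCurv R v := by
    simp only [holSecCurv, mul_sum, Pi.smul_apply, Complex.real_smul, map_mul,
      Complex.conj_ofReal]
    refine sum_congr rfl fun i _ => sum_congr rfl fun j _ => sum_congr rfl fun k _ =>
      sum_congr rfl fun l _ => ?_
    push_cast
    ring
  rw [h, Complex.re_ofReal_mul]

section Unitary

variable [DecidableEq ι] {U : Matrix ι κ ℂ}

omit [Fintype ι] in
theorem sum_mul_conj_eq_ite (hU : U * Uᴴ = 1) (i j : ι) :
    ∑ p, U i p * conj (U j p) = if i = j then 1 else 0 := by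
  simpa [Matrix.mul_apply, Matrix.one_apply] using congrFun (congrFun hU i) j

omit [Fintype ι] in
theorem sum_sum_mul_conj_mul_mul_conj (hU : U * Uᴴ = 1) (x : ℂ) (i j k l : ι) :
    ∑ p, ∑ r, x * U i p * conj (U j p) * U k r * conj (U l r)
      = x * (if i = j then 1 else 0) * (if k = l then 1 else 0) := by
  simp only [← sum_mul_conj_eq_ite hU, mul_sum, sum_mul]
  rw [sum_comm]
  exact sum_congr rfl fun p _ => sum_congr rfl fun r _ => by ring

theorem scalarCurv_changeFrame (R : ι → ι → ι → ι → ℂ) (hU : U * Uᴴ = 1) :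
    scalarCurv (changeFrame R U) = scalarCurv R := by
  simp only [scalarCurv, changeFrame, sum_comm_sum₄ (α := κ), sum_sum_mul_conj_mul_mul_conj hU]
  simp [sum_ite_eq]

theorem scalarCurvHat_changeFrame (R : ι → ι → ι → ι → ℂ) (hU : U * Uᴴ = 1) :
    scalarCurvHat (changeFrame R U) = scalarCurvHat R := by
  have h : ∀ i j k l, ∑ p, ∑ r, R i j k l * U i p * conj (U j r) * U k r * conj (U l p)
      = ∑ p, ∑ r, R i j k l * U i p * conj (U l p) * U k r * conj (U j r) :=
    fun i j k l => sum_congr rfl fun p _ => sum_congr rfl fun r _ => by ring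
  simp only [scalarCurvHat, changeFrame, sum_comm_sum₄ (α := κ), h,
    sum_sum_mul_conj_mul_mul_conj hU]
  simp [sum_ite_eq]

end Unitary

theorem exists_unitary_col_eq_smul [DecidableEq ι] {v : ι → ℂ} (hv : v ≠ 0) :
    ∃ U : Matrix ι ι ℂ, U * Uᴴ = 1 ∧ ∃ p, ∃ c : ℝ, 0 < c ∧ Uᵀ p = c • v := by
  obtain ⟨p, -⟩ := Function.ne_iff.mp hv
  set w : EuclideanSpace ℂ ι := WithLp.toLp 2 v
  have hw : w ≠ 0 := by simpa [w] using hv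
  set c : ℝ := ‖w‖⁻¹
  have hu : Orthonormal ℂ (({p} : Set ι).domRestrict fun _ => (c : ℂ) • w) :=
    orthonormal_subsingleton_iff.mpr fun _ => by simp [c, norm_smul, hw]
  obtain ⟨b, hb⟩ := hu.exists_orthonormalBasis_extension_of_card_eq (by simp)
  refine ⟨(EuclideanSpace.basisFun ι ℂ).toBasis.toMatrix b, by simp, p, c, by positivity, ?_⟩
  ext i
  simp [Module.Basis.toMatrix_apply, hb p rfl, w, Complex.real_smul]

def phaseVec (f : ι → Fin 4) (a : ι) : ℂ := Complex.I ^ (f a : ℕ)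

section Averaging

variable [DecidableEq ι]

theorem sum_phaseVec_mul (p q r s : ι) :
    ∑ f : ι → Fin 4, phaseVec f p * conj (phaseVec f q) * phaseVec f r * conj (phaseVec f s)
      = if (p = q ∧ r = s) ∨ (p = s ∧ r = q) then 4 ^ Fintype.card ι else 0 := by
  have hprod : ∀ f : ι → Fin 4,
      phaseVec f p * conj (phaseVec f q) * phaseVec f r * conj (phaseVec f s)
        = ∏ a, phaseVec f a ^ Multiset.count a {p, r}
            * conj (phaseVec f a) ^ Multiset.count a {q, s} := fun f => by
    rw [prod_mul_distrib, prod_pow_count_pair, prod_pow_count_pair (fun a => conj _)]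
    ring
  rw [sum_congr rfl fun f _ => hprod f]
  simp only [phaseVec]
  rw [← Fintype.prod_sum (κ := fun _ => Fin 4) (fun a c => (Complex.I ^ (c : ℕ)) ^ Multiset.count a {p, r}
    * conj (Complex.I ^ (c : ℕ)) ^ Multiset.count a {q, s})]
  have hcount : ∀ a x y : ι, Multiset.count a {x, y} ≤ 2 :=
    fun a x y => (Multiset.count_le_card _ _).trans (by simp)
  simp only [sum_I_pow_pow_mul_conj_pow (hcount _ _ _) (hcount _ _ _),
    prod_ite_zero, prod_const, card_univ, mem_univ, forall_const, ← Multiset.ext,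
    Multiset.pair_eq_pair_iff]

theorem sum_mul_ite_pairing (T : ι → ι → ι → ι → ℂ) (c : ℂ) :
    ∑ p, ∑ q, ∑ r, ∑ s, T p q r s * (if (p = q ∧ r = s) ∨ (p = s ∧ r = q) then c else 0)
      = (scalarCurv T + scalarCurvHat T - ∑ p, T p p p p) * c := by
  have hboth : ∀ p q r s : ι, ((p = q ∧ r = s) ∧ (p = s ∧ r = q)) ↔ (q = p ∧ r = p ∧ s = p) := by
    grind
  simp only [ite_or_eq_add_sub, hboth, mul_add, mul_sub, sum_add_distrib, sum_sub_distrib,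
    ite_and, mul_ite, mul_zero, sum_ite_eq, sum_ite_eq', mem_univ, if_true]
  simp [scalarCurv, scalarCurvHat, sum_mul, add_mul, sub_mul]

theorem sum_holSecCurv_phaseVec (T : ι → ι → ι → ι → ℂ) :
    ∑ f : ι → Fin 4, holSecCurv T (phaseVec f)
      = 4 ^ Fintype.card ι * (scalarCurv T + scalarCurvHat T - ∑ p, T p p p p) := by
  have h : ∀ p q r s, ∑ f : ι → Fin 4,
      T p q r s * phaseVec f p * conj (phaseVec f q) * phaseVec f r * conj (phaseVec f s)
        = T p q r s * if (p = q ∧ r = s) ∨ (p = s ∧ r = q) then 4 ^ Fintype.card ι else 0 := by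
    intro p q r s
    rw [← sum_phaseVec_mul, mul_sum]
    exact sum_congr rfl fun f _ => by ring
  simp only [holSecCurv, sum_comm_sum₄ (α := ι → Fin 4), h, sum_mul_ite_pairing]
  ring

theorem re_sum_diag_le {T : ι → ι → ι → ι → ℂ} (hT : ∀ v, 0 ≤ (holSecCurv T v).re) :
    (∑ p, T p p p p).re ≤ (scalarCurv T + scalarCurvHat T).re := by
  have hmean : 0 ≤ (∑ f : ι → Fin 4, holSecCurv T (phaseVec f)).re := by
    rw [Complex.re_sum]
    exact sum_nonneg fun f _ => hT _
  rw [sum_holSecCurv_phaseVec, show (4 : ℂ) ^ Fintype.card ι = ((4 ^ Fintype.card ι : ℝ) : ℂ) by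
    push_cast; rfl, Complex.re_ofReal_mul, Complex.sub_re] at hmean
  linarith [nonneg_of_mul_nonneg_right hmean (by positivity)]

end Averaging

theorem berger_averaging_quasi_pos_general (n : ℕ)
    (R : Fin n → Fin n → Fin n → Fin n → ℂ)
    (hnonneg : ∀ v : Fin n → ℂ,
      0 ≤ (∑ i, ∑ j, ∑ k, ∑ l,
        R i j k l * v i * (starRingEnd ℂ) (v j) * v k * (starRingEnd ℂ) (v l)).re)
    (hpos : ∃ v₀ : Fin n → ℂ, v₀ ≠ 0 ∧
      0 < (∑ i, ∑ j, ∑ k, ∑ l,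
        R i j k l * v₀ i * (starRingEnd ℂ) (v₀ j) * v₀ k * (starRingEnd ℂ) (v₀ l)).re) :
    0 < ((∑ i, ∑ k, R i i k k) + (∑ i, ∑ k, R i k k i)).re := by
  obtain ⟨v₀, hv₀, hHv₀⟩ := hpos
  obtain ⟨U, hU, p₀, c, hc, hUp₀⟩ := exists_unitary_col_eq_smul hv₀
  have hframe : ∀ x, 0 ≤ (holSecCurv (changeFrame R U) x).re := fun x => by
    rw [holSecCurv_changeFrame]
    exact hnonneg _
  have hdiag : 0 < (∑ p, changeFrame R U p p p p).re := by
    rw [Complex.re_sum]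
    refine sum_pos' (fun p _ => hnonneg (Uᵀ p)) ⟨p₀, mem_univ _, ?_⟩
    rw [changeFrame_diag, hUp₀, re_holSecCurv_smul]
    exact mul_pos (pow_pos hc 4) hHv₀
  have hle := re_sum_diag_le hframe
  rw [scalarCurv_changeFrame R hU, scalarCurvHat_changeFrame R hU] at hle
  exact hdiag.trans_le hle

/-- Berger's averaging trick, quasi-positive version: if the holomorphic sectional
curvature `H(v)` of a curvature-type tensor `R` on `ℂ^n` is nonnegative for all `v`
and strictly positive for some `v₀ ≠ 0`, then `S + Ŝ > 0`. -/
theorem berger_averaging_quasi_pos (n : ℕ) (hn : 1 ≤ n)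
    (R : Fin n → Fin n → Fin n → Fin n → ℂ)
    (hsym1 : ∀ i j k l, R i j k l = (starRingEnd ℂ) (R j i l k))
    (hsym2 : ∀ i j k l, R i j k l = R k j i l)
    (hnonneg : ∀ v : Fin n → ℂ,
      0 ≤ (∑ i, ∑ j, ∑ k, ∑ l,
        R i j k l * v i * (starRingEnd ℂ) (v j) * v k * (starRingEnd ℂ) (v l)).re)
    (hpos : ∃ v₀ : Fin n → ℂ, v₀ ≠ 0 ∧
      0 < (∑ i, ∑ j, ∑ k, ∑ l,
        R i j k l * v₀ i * (starRingEnd ℂ) (v₀ j) * v₀ k * (starRingEnd ℂ) (v₀ l)).re) :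
    0 < ((∑ i, ∑ k, R i i k k) + (∑ i, ∑ k, R i k k i)).re :=
  berger_averaging_quasi_pos_general n R hnonneg hpos
end
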